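/- arXiv:2205.01758 — 2 statements merged into one kernel-verified Lean document; each statement's English description precedes it below -/
import Mathlib

section
/- Given four points q₀, q₁, q₂, q₃ ∈ ℝ³, let P ∈ M₃(ℝ) be the matrix with columns q₁−q₀, q₂−q₀, q₃−q₀, assumed invertible; let s = (1,1,1)ᵀ ∈ ℝ³, let A ∈ M_{3×4}(ℝ) be the block matrix A = [−P⁻ᵀ s | P⁻ᵀ], and write G = P⁻¹P⁻ᵀ. Then every absolute row sum of the 4×4 Gram matrix AᵀA is at most 6 times the maximum absolute row sum of G: for every i ∈ {0,1,2,3}, Σ_{j=0}^{3} |(AᵀA)ᵢⱼ| ≤ 6·max_{k∈{1,2,3}} Σ_{l=1}^{3} |G_{kl}|. -/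
/-!
With `E = [-s | I]`, the matrix `A` factors as `P⁻ᵀ E`, so `AᵀA = Eᵀ G E` with `G = P⁻¹ P⁻ᵀ`.
The maximum absolute row sum is the operator norm on `ℓ^∞`, hence submultiplicative, and
`‖Eᵀ‖∞ = 3` (attained at the row `-sᵀ`) while `‖E‖∞ = 2`.
-/

open Matrix

/-- The edge-displacement matrix of the tetrahedron: columns q₁−q₀, q₂−q₀, q₃−q₀. -/
noncomputable def Pmat (q0 q1 q2 q3 : Fin 3 → ℝ) : Matrix (Fin 3) (Fin 3) ℝ :=
  Matrix.of fun i j => ![q1, q2, q3] j i - q0 i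

/-- The spatial differential operator A = [−P⁻ᵀ s | P⁻ᵀ] with s = (1,1,1)ᵀ. -/
noncomputable def Amat (q0 q1 q2 q3 : Fin 3 → ℝ) : Matrix (Fin 3) (Fin 4) ℝ :=
  Matrix.of fun i j =>
    Fin.cases (-((((Pmat q0 q1 q2 q3)⁻¹)ᵀ *ᵥ fun _ => (1 : ℝ)) i))
      (fun j' => ((Pmat q0 q1 q2 q3)⁻¹)ᵀ i j') j

attribute [local instance] Matrix.linftyOpSeminormedAddCommGroup

namespace Matrix

section LinftyOp

variable {m n α : Type*} [Fintype m] [Fintype n] [SeminormedAddCommGroup α]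

theorem sum_norm_apply_le_linfty_opNorm (A : Matrix m n α) (i : m) :
    ∑ j, ‖A i j‖ ≤ ‖A‖ := by
  have h := norm_le_pi_norm (fun i => WithLp.toLp 1 (A i)) i
  simp only [PiLp.norm_eq_of_L1] at h
  exact h

theorem linfty_opNorm_le_of_forall {A : Matrix m n α} {c : ℝ} (hc : 0 ≤ c)
    (h : ∀ i, ∑ j, ‖A i j‖ ≤ c) : ‖A‖ ≤ c :=
  (pi_norm_le_iff_of_nonneg (x := fun i => WithLp.toLp 1 (A i)) hc).2 fun i => by
    simpa only [PiLp.norm_eq_of_L1] using h i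

end LinftyOp

section RefBaryGrad

/-- The matrix `[-s | I]`; its columns are the gradients of the barycentric coordinates of the
reference simplex with vertices `0, e₀, …, eₙ₋₁`. -/
def refBaryGrad (R : Type*) [Ring R] (n : ℕ) : Matrix (Fin n) (Fin (n + 1)) R :=
  of fun k => Fin.cons (-1) ((1 : Matrix (Fin n) (Fin n) R) k)

@[simp]
theorem refBaryGrad_zero {R : Type*} [Ring R] {n : ℕ} (k : Fin n) :
    refBaryGrad R n k 0 = (-1 : R) :=
  rfl

@[simp]
theorem refBaryGrad_succ {R : Type*} [Ring R] {n : ℕ} (k j : Fin n) :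
    refBaryGrad R n k j.succ = (1 : Matrix (Fin n) (Fin n) R) k j := rfl

theorem mul_refBaryGrad {R : Type*} [Ring R] {m n : ℕ} (B : Matrix (Fin m) (Fin n) R) :
    B * refBaryGrad R n = of fun i => Fin.cons (-(B *ᵥ fun _ => 1) i) (B i) := by
  ext i j
  cases j using Fin.cases <;> simp [mul_apply, mulVec, dotProduct, one_apply]

variable {R : Type*} [NormedRing R] [NormOneClass R]

theorem linfty_opNorm_refBaryGrad_le (n : ℕ) : ‖refBaryGrad R n‖ ≤ 2 := by
  refine linfty_opNorm_le_of_forall zero_le_two fun k => ?_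
  simp [Fin.sum_univ_succ, one_apply, apply_ite norm, one_add_one_eq_two]

theorem linfty_opNorm_transpose_refBaryGrad_le (n : ℕ) :
    ‖(refBaryGrad R n)ᵀ‖ ≤ max n 1 := by
  refine linfty_opNorm_le_of_forall (by positivity) fun j => ?_
  cases j using Fin.cases <;> simp [one_apply, apply_ite norm]

end RefBaryGrad

end Matrix

theorem Amat_eq_mul_refBaryGrad (q0 q1 q2 q3 : Fin 3 → ℝ) :
    Amat q0 q1 q2 q3 = ((Pmat q0 q1 q2 q3)⁻¹)ᵀ * refBaryGrad ℝ 3 := by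
  rw [mul_refBaryGrad]; rfl

theorem transpose_Amat_mul_Amat (q0 q1 q2 q3 : Fin 3 → ℝ) :
    (Amat q0 q1 q2 q3)ᵀ * Amat q0 q1 q2 q3 =
      (refBaryGrad ℝ 3)ᵀ * ((Pmat q0 q1 q2 q3)⁻¹ * ((Pmat q0 q1 q2 q3)⁻¹)ᵀ) *
        refBaryGrad ℝ 3 := by
  simp only [Amat_eq_mul_refBaryGrad, transpose_mul, transpose_transpose, Matrix.mul_assoc]

theorem gram_abs_row_sum_le_general {q0 q1 q2 q3 : Fin 3 → ℝ}
    (i : Fin 4) :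
    ∑ j, |((Amat q0 q1 q2 q3)ᵀ * Amat q0 q1 q2 q3) i j|
      ≤ 6 * ⨆ k : Fin 3,
          ∑ l, |((Pmat q0 q1 q2 q3)⁻¹ * ((Pmat q0 q1 q2 q3)⁻¹)ᵀ) k l| := by
  set A := Amat q0 q1 q2 q3
  set G := (Pmat q0 q1 q2 q3)⁻¹ * ((Pmat q0 q1 q2 q3)⁻¹)ᵀ
  set M := ⨆ k : Fin 3, ∑ l, |G k l|
  have hM : ∀ k, ∑ l, ‖G k l‖ ≤ M := fun k =>
    le_ciSup (f := fun k => ∑ l, |G k l|) (Set.finite_range _).bddAbove k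
  have hM0 : 0 ≤ M := (Finset.sum_nonneg fun _ _ => norm_nonneg _).trans (hM 0)
  have hG : ‖G‖ ≤ M := linfty_opNorm_le_of_forall hM0 hM
  have hE : ‖refBaryGrad ℝ 3‖ ≤ 2 := linfty_opNorm_refBaryGrad_le 3
  have hEt : ‖(refBaryGrad ℝ 3)ᵀ‖ ≤ 3 := by
    simpa using linfty_opNorm_transpose_refBaryGrad_le (R := ℝ) 3
  calc ∑ j, |(Aᵀ * A) i j| ≤ ‖Aᵀ * A‖ := sum_norm_apply_le_linfty_opNorm (Aᵀ * A) i
    _ = ‖(refBaryGrad ℝ 3)ᵀ * G * refBaryGrad ℝ 3‖ := by rw [transpose_Amat_mul_Amat]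
    _ ≤ ‖(refBaryGrad ℝ 3)ᵀ‖ * ‖G‖ * ‖refBaryGrad ℝ 3‖ :=
        (linfty_opNorm_mul _ _).trans (by gcongr; exact linfty_opNorm_mul _ _)
    _ ≤ 3 * M * 2 := by gcongr
    _ = 6 * M := by ring

/-- Every absolute row sum of the Gram matrix AᵀA is at most 6 times the maximum absolute
row sum of G = P⁻¹P⁻ᵀ. -/
theorem gram_abs_row_sum_le {q0 q1 q2 q3 : Fin 3 → ℝ}
    (hP : IsUnit (Pmat q0 q1 q2 q3).det) (i : Fin 4) :
    ∑ j, |((Amat q0 q1 q2 q3)ᵀ * Amat q0 q1 q2 q3) i j|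
      ≤ 6 * ⨆ k : Fin 3,
          ∑ l, |((Pmat q0 q1 q2 q3)⁻¹ * ((Pmat q0 q1 q2 q3)⁻¹)ᵀ) k l| :=
  gram_abs_row_sum_le_general i
end

section
/- (Proposition 1, single tetrahedron.) Given four points q₀, q₁, q₂, q₃ ∈ ℝ³, let P ∈ M₃(ℝ) be the matrix with columns q₁−q₀, q₂−q₀, q₃−q₀, assumed invertible; let s = (1,1,1)ᵀ ∈ ℝ³, and let A ∈ M_{3×4}(ℝ) be the block matrix A = [−P⁻ᵀ s | P⁻ᵀ]. Let ρ, μ, V, h > 0, set L = μV·AᵀA and M = (ρV/4)·I₄. If h² < ρ·λ_min(PᵀP)/(24√3·μ), where λ_min(PᵀP) is the smallest eigenvalue of PᵀP, then for every fixed f ∈ ℝ⁴ and every initial vector v⁰ ∈ ℝ⁴, the fixed-force Jacobi iteration M v^{k+1} = f − h²L v^k converges, and its limit is the unique solution v* of (M + h²L) v* = f. -/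
open Matrix Filter Topology

/-! The iteration is `v ↦ M⁻¹ (f - h² L v)` with `M = (ρV/4) I`, a contraction of Euclidean space
whenever `‖h² L‖ < ρV/4` in the `ℓ²` operator norm; its unique fixed point is the solution of
`(M + h² L) v = f`. Writing `A = P⁻ᵀ C` with `C = [-s | I₃]` gives `AᵀA = Cᵀ (PᵀP)⁻¹ C`, and
`‖C‖ ≤ 2`, `‖(PᵀP)⁻¹‖ ≤ 1 / λ_min(PᵀP)`, so `‖h² L‖ ≤ 4 h² μ V / λ_min(PᵀP)`. This is below `ρV/4`
as soon as `16 h² μ < ρ λ_min(PᵀP)`, which the time-step bound gives since `16 < 24 √3`. -/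

open scoped MatrixOrder Matrix.Norms.L2Operator
open WithLp

namespace Matrix

variable {m n : Type*} [Fintype m] [Fintype n] [DecidableEq n]

theorem l2_opNorm_le_of_norm_mulVec_le {A : Matrix m n ℝ} {K : ℝ} (hK : 0 ≤ K)
    (hA : ∀ x : EuclideanSpace ℝ n, ‖toLp 2 (A *ᵥ x)‖ ≤ K * ‖x‖) : ‖A‖ ≤ K :=
  ContinuousLinearMap.opNorm_le_bound _ hK hA

theorem exists_tendsto_solution_of_l2_opNorm_lt {c : ℝ} {B : Matrix n n ℝ} (hc : 0 < c)
    (hB : ‖B‖ < c) (f : n → ℝ) {v : ℕ → n → ℝ}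
    (hv : ∀ k, (c • (1 : Matrix n n ℝ)) *ᵥ v (k + 1) = f - B *ᵥ v k) :
    ∃ vstar, Tendsto v atTop (𝓝 vstar) ∧ (c • 1 + B) *ᵥ vstar = f ∧
      ∀ w, (c • 1 + B) *ᵥ w = f → w = vstar := by
  let T (u : EuclideanSpace ℝ n) : EuclideanSpace ℝ n :=
    c⁻¹ • (toLp 2 f - toEuclideanCLM (n := n) (𝕜 := ℝ) B u)
  have hcontr : ContractingWith (‖B‖ / c).toNNReal T := by
    refine ⟨by rwa [Real.toNNReal_lt_one, div_lt_one hc], .of_dist_le_mul fun x y => ?_⟩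
    rw [Real.coe_toNNReal _ (by positivity), dist_eq_norm, dist_eq_norm]
    calc ‖T x - T y‖ = c⁻¹ * ‖toEuclideanCLM (n := n) (𝕜 := ℝ) B (y - x)‖ := by
          rw [← smul_sub, sub_sub_sub_cancel_left, ← map_sub, norm_smul,
            Real.norm_of_nonneg (inv_nonneg.mpr hc.le)]
      _ ≤ c⁻¹ * (‖B‖ * ‖y - x‖) := by
          gcongr
          exact (toEuclideanCLM (n := n) (𝕜 := ℝ) B).le_opNorm _
      _ = ‖B‖ / c * ‖x - y‖ := by rw [norm_sub_rev]; ring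
  have hT (u : n → ℝ) : T (toLp 2 u) = toLp 2 (c⁻¹ • (f - B *ᵥ u)) := rfl
  have hfixed (w : n → ℝ) : Function.IsFixedPt T (toLp 2 w) ↔ (c • 1 + B) *ᵥ w = f := by
    rw [Function.IsFixedPt, hT, (toLp_injective 2).eq_iff, inv_smul_eq_iff₀ hc.ne',
      add_mulVec, smul_mulVec, one_mulVec, sub_eq_iff_eq_add, add_comm, eq_comm]
  have hiterate (k : ℕ) : toLp 2 (v k) = T^[k] (toLp 2 (v 0)) := by
    induction k with
    | zero => rfl
    | succ k ih =>
      rw [Function.iterate_succ_apply', ← ih, hT, ← hv, smul_mulVec, one_mulVec,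
        inv_smul_smul₀ hc.ne']
  refine ⟨ofLp (hcontr.fixedPoint T), ?_, (hfixed _).mp hcontr.fixedPoint_isFixedPt,
    fun w hw => congrArg ofLp (hcontr.fixedPoint_unique ((hfixed w).mpr hw))⟩
  refine ((PiLp.continuous_ofLp 2 _).tendsto _ |>.comp
    (hcontr.tendsto_iterate_fixedPoint (toLp 2 (v 0)))).congr fun k => ?_
  simp [← hiterate]

variable {H : Matrix n n ℝ}

theorem IsHermitian.iInf_eigenvalues_mul_dotProduct_self_le (hH : H.IsHermitian)
    (x : n → ℝ) : (⨅ i, hH.eigenvalues i) * (x ⬝ᵥ x) ≤ x ⬝ᵥ (H *ᵥ x) := by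
  have hle : algebraMap ℝ (Matrix n n ℝ) (⨅ i, hH.eigenvalues i) ≤ H := by
    refine algebraMap_le_of_le_spectrum (fun r hr => ?_) hH.isSelfAdjoint
    obtain ⟨i, rfl⟩ := hH.spectrum_real_eq_range_eigenvalues ▸ hr
    exact ciInf_le (Finite.bddBelow_range _) i
  simpa [Algebra.algebraMap_eq_smul_one, sub_mulVec, smul_mulVec, dotProduct_smul] using
    (Matrix.le_iff.mp hle).dotProduct_mulVec_nonneg x

theorem IsHermitian.iInf_eigenvalues_mul_norm_le_norm_mulVec (hH : H.IsHermitian)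
    (x : EuclideanSpace ℝ n) : (⨅ i, hH.eigenvalues i) * ‖x‖ ≤ ‖toLp 2 (H *ᵥ x)‖ := by
  rcases (norm_nonneg x).eq_or_lt with hx | hx
  · rw [← hx, mul_zero]; exact norm_nonneg _
  refine le_of_mul_le_mul_right ?_ hx
  calc (⨅ i, hH.eigenvalues i) * ‖x‖ * ‖x‖
      _ = (⨅ i, hH.eigenvalues i) * (ofLp x ⬝ᵥ ofLp x) := by
        rw [mul_assoc, ← real_inner_self_eq_norm_mul_norm, EuclideanSpace.inner_eq_star_dotProduct]
        simp
      _ ≤ ofLp x ⬝ᵥ (H *ᵥ x) := hH.iInf_eigenvalues_mul_dotProduct_self_le x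
      _ = inner ℝ x (toLp 2 (H *ᵥ x)) := by
        rw [EuclideanSpace.inner_eq_star_dotProduct]; simp [dotProduct_comm]
      _ ≤ ‖toLp 2 (H *ᵥ x)‖ * ‖x‖ := by rw [mul_comm]; exact real_inner_le_norm _ _

theorem IsHermitian.l2_opNorm_inv_le (hH : H.IsHermitian)
    (hpos : 0 < ⨅ i, hH.eigenvalues i) : ‖H⁻¹‖ ≤ (⨅ i, hH.eigenvalues i)⁻¹ := by
  have hdet : IsUnit H.det := by
    refine (PosDef.det_pos ?_).ne'.isUnit
    exact hH.posDef_iff_eigenvalues_pos.mpr fun i =>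
      hpos.trans_le (ciInf_le (Finite.bddBelow_range _) i)
  refine l2_opNorm_le_of_norm_mulVec_le (inv_nonneg.mpr hpos.le) fun w => ?_
  rw [inv_mul_eq_div, le_div_iff₀' hpos]
  simpa [mulVec_mulVec, mul_nonsing_inv _ hdet] using
    hH.iInf_eigenvalues_mul_norm_le_norm_mulVec (toLp 2 (H⁻¹ *ᵥ w))

end Matrix

def edgeDiff : Matrix (Fin 3) (Fin 4) ℝ :=
  !![-1, 1, 0, 0; -1, 0, 1, 0; -1, 0, 0, 1]

theorem Amat_eq_inv_transpose_mul_edgeDiff (q0 q1 q2 q3 : Fin 3 → ℝ) :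
    Amat q0 q1 q2 q3 = ((Pmat q0 q1 q2 q3)⁻¹)ᵀ * edgeDiff := by
  ext i j
  refine Fin.cases ?_ (fun j => ?_) j
  · simp only [Amat, edgeDiff, of_apply, Fin.cases_zero, mulVec, dotProduct, mul_apply,
      transpose_apply, Fin.sum_univ_three, cons_val', cons_val_zero, cons_val_one, cons_val,
      cons_val_fin_one, mul_one, mul_neg]
    ring
  · simp only [Amat, of_apply, Fin.cases_succ]
    fin_cases j <;> simp [edgeDiff, mul_apply, Fin.sum_univ_three]

theorem Amat_transpose_mul_self_eq (q0 q1 q2 q3 : Fin 3 → ℝ) :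
    (Amat q0 q1 q2 q3)ᵀ * Amat q0 q1 q2 q3
      = edgeDiffᵀ * ((Pmat q0 q1 q2 q3)ᵀ * Pmat q0 q1 q2 q3)⁻¹ * edgeDiff := by
  rw [Amat_eq_inv_transpose_mul_edgeDiff, transpose_mul, transpose_transpose,
    Matrix.mul_inv_rev, transpose_nonsing_inv]
  simp only [Matrix.mul_assoc]

-- Sharp: `edgeDiff * edgeDiffᵀ = I₃ + s sᵀ` has largest eigenvalue `4`.
theorem l2_opNorm_edgeDiff_le : ‖edgeDiff‖ ≤ 2 := by
  refine l2_opNorm_le_of_norm_mulVec_le zero_le_two fun u => ?_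
  refine le_of_pow_le_pow_left₀ two_ne_zero (by positivity) ?_
  rw [mul_pow, EuclideanSpace.real_norm_sq_eq, EuclideanSpace.real_norm_sq_eq]
  simp only [edgeDiff, mulVec, dotProduct, of_apply, Fin.sum_univ_three, Fin.sum_univ_four,
    cons_val', cons_val_zero, cons_val_one, cons_val, cons_val_fin_one, neg_mul, one_mul, zero_mul,
    add_zero]
  nlinarith [sq_nonneg (u 0 + u 1 + u 2 + u 3), sq_nonneg (u 1 - u 2), sq_nonneg (u 1 - u 3),
    sq_nonneg (u 2 - u 3)]

theorem l2_opNorm_Amat_transpose_mul_self_le {q0 q1 q2 q3 : Fin 3 → ℝ}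
    (hH : ((Pmat q0 q1 q2 q3)ᵀ * Pmat q0 q1 q2 q3).IsHermitian)
    (hpos : 0 < ⨅ i, hH.eigenvalues i) :
    ‖(Amat q0 q1 q2 q3)ᵀ * Amat q0 q1 q2 q3‖ ≤ 4 / ⨅ i, hH.eigenvalues i := by
  have hC : ‖edgeDiff‖ ≤ 2 := l2_opNorm_edgeDiff_le
  have hCt : ‖edgeDiffᵀ‖ ≤ 2 := by
    rwa [← conjTranspose_eq_transpose_of_trivial, l2_opNorm_conjTranspose]
  have hinv := hH.l2_opNorm_inv_le hpos
  rw [Amat_transpose_mul_self_eq]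
  calc _ ≤ ‖edgeDiffᵀ‖ * ‖((Pmat q0 q1 q2 q3)ᵀ * Pmat q0 q1 q2 q3)⁻¹‖ * ‖edgeDiff‖ :=
        (l2_opNorm_mul _ _).trans (by gcongr; exact l2_opNorm_mul _ _)
    _ ≤ 2 * (⨅ i, hH.eigenvalues i)⁻¹ * 2 := by gcongr
    _ = 4 / ⨅ i, hH.eigenvalues i := by ring

theorem prop1_single_tetrahedron_general {q0 q1 q2 q3 : Fin 3 → ℝ}
    (hH : ((Pmat q0 q1 q2 q3)ᵀ * Pmat q0 q1 q2 q3).IsHermitian)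
    (ρ μ V h : ℝ) (hρ : 0 < ρ) (hμ : 0 < μ) (hV : 0 < V)
    (hstep : h ^ 2 < ρ * (⨅ i : Fin 3, hH.eigenvalues i) / (24 * Real.sqrt 3 * μ))
    (f : Fin 4 → ℝ) (v : ℕ → Fin 4 → ℝ)
    (hiter : ∀ k, ((ρ * V / 4) • (1 : Matrix (Fin 4) (Fin 4) ℝ)) *ᵥ v (k + 1)
        = f - (h ^ 2 • ((μ * V) • ((Amat q0 q1 q2 q3)ᵀ * Amat q0 q1 q2 q3))) *ᵥ v k) :
    ∃ vstar : Fin 4 → ℝ, Tendsto v atTop (𝓝 vstar) ∧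
      ((ρ * V / 4) • (1 : Matrix (Fin 4) (Fin 4) ℝ)
          + h ^ 2 • ((μ * V) • ((Amat q0 q1 q2 q3)ᵀ * Amat q0 q1 q2 q3))) *ᵥ vstar = f ∧
      ∀ w : Fin 4 → ℝ,
        ((ρ * V / 4) • (1 : Matrix (Fin 4) (Fin 4) ℝ)
            + h ^ 2 • ((μ * V) • ((Amat q0 q1 q2 q3)ᵀ * Amat q0 q1 q2 q3))) *ᵥ w = f
          → w = vstar := by
  set lam := ⨅ i : Fin 3, hH.eigenvalues i
  have hbound : 16 * (h ^ 2 * μ) < ρ * lam := by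
    have h16 : (16 : ℝ) ≤ 24 * Real.sqrt 3 := by
      nlinarith [Real.one_le_sqrt.mpr (by norm_num : (1 : ℝ) ≤ 3)]
    rw [lt_div_iff₀ (by positivity)] at hstep
    nlinarith [mul_le_mul_of_nonneg_right h16 (by positivity : 0 ≤ h ^ 2 * μ)]
  have hlam : 0 < lam := pos_of_mul_pos_right (hbound.trans_le' (by positivity)) hρ.le
  refine exists_tendsto_solution_of_l2_opNorm_lt (by positivity) ?_ f hiter
  calc ‖h ^ 2 • (μ * V) • ((Amat q0 q1 q2 q3)ᵀ * Amat q0 q1 q2 q3)‖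
      _ = h ^ 2 * (μ * V) * ‖(Amat q0 q1 q2 q3)ᵀ * Amat q0 q1 q2 q3‖ := by
        rw [norm_smul, norm_smul, Real.norm_of_nonneg (by positivity),
          Real.norm_of_nonneg (by positivity), ← mul_assoc]
      _ ≤ h ^ 2 * (μ * V) * (4 / lam) := by
        gcongr
        exact l2_opNorm_Amat_transpose_mul_self_le hH hlam
      _ < ρ * V / 4 := by
        rw [mul_div_assoc', div_lt_div_iff₀ hlam four_pos]
        nlinarith

/-- Proposition 1 (single tetrahedron): under the time-step bound
h² < ρ·λ_min(PᵀP)/(24√3·μ), the fixed-force Jacobi iteration M v^{k+1} = f − h²L v^k,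
with M = (ρV/4)·I and L = μV·AᵀA, converges to the unique solution of (M + h²L) v = f. -/
theorem prop1_single_tetrahedron {q0 q1 q2 q3 : Fin 3 → ℝ}
    (hP : IsUnit (Pmat q0 q1 q2 q3).det)
    (hH : ((Pmat q0 q1 q2 q3)ᵀ * Pmat q0 q1 q2 q3).IsHermitian)
    (ρ μ V h : ℝ) (hρ : 0 < ρ) (hμ : 0 < μ) (hV : 0 < V) (hh : 0 < h)
    (hstep : h ^ 2 < ρ * (⨅ i : Fin 3, hH.eigenvalues i) / (24 * Real.sqrt 3 * μ))
    (f v0 : Fin 4 → ℝ) (v : ℕ → Fin 4 → ℝ) (hinit : v 0 = v0)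
    (hiter : ∀ k, ((ρ * V / 4) • (1 : Matrix (Fin 4) (Fin 4) ℝ)) *ᵥ v (k + 1)
        = f - (h ^ 2 • ((μ * V) • ((Amat q0 q1 q2 q3)ᵀ * Amat q0 q1 q2 q3))) *ᵥ v k) :
    ∃ vstar : Fin 4 → ℝ, Tendsto v atTop (𝓝 vstar) ∧
      ((ρ * V / 4) • (1 : Matrix (Fin 4) (Fin 4) ℝ)
          + h ^ 2 • ((μ * V) • ((Amat q0 q1 q2 q3)ᵀ * Amat q0 q1 q2 q3))) *ᵥ vstar = f ∧
      ∀ w : Fin 4 → ℝ,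
        ((ρ * V / 4) • (1 : Matrix (Fin 4) (Fin 4) ℝ)
            + h ^ 2 • ((μ * V) • ((Amat q0 q1 q2 q3)ᵀ * Amat q0 q1 q2 q3))) *ᵥ w = f
          → w = vstar :=
  prop1_single_tetrahedron_general hH ρ μ V h hρ hμ hV hstep f v hiter
end
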